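/- If E ⊆ G is extreme and some nonzero d ∈ G has exactly one representation d = x − y with x, y ∈ E, then we reach a contradiction; that is, any extreme set E has the property that every nonzero element of E − E has at least two representations as a difference of elements of E. -/

import Mathlib

open Complex Finset

/-- A finite subset `E` of a finite abelian group `G` is extreme if there is a
function supported on `E`, unimodular on `E`, with vanishing autocorrelation at
nonzero shifts. -/
def IsExtremeSet {G : Type*} [AddCommGroup G] [Fintype G] [DecidableEq G]
    (E : Finset G) : Prop :=
  ∃ f : G → ℂ,
    (∀ x ∈ E, ‖f x‖ = 1) ∧ (∀ x ∉ E, f x = 0) ∧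
    ∀ d : G, d ≠ 0 → ∑ x : G, f x * (starRingEnd ℂ) (f (x - d)) = 0

theorem sum_mul_comp_sub_eq_of_unique_sub_mem {G R : Type*} [AddCommGroup G] [Fintype G]
    [NonUnitalNonAssocSemiring R] {f g : G → R} {E : Finset G}
    (hf : ∀ z ∉ E, f z = 0) (hg : ∀ z ∉ E, g z = 0) {d x : G}
    (huniq : ∀ z ∈ E, z - d ∈ E → z = x) :
    ∑ z, f z * g (z - d) = f x * g (x - d) := by
  refine Finset.sum_eq_single x (fun z _ hzx => ?_) (by simp)
  by_cases hz : z ∈ E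
  · by_cases hzd : z - d ∈ E
    · exact absurd (huniq z hz hzd) hzx
    · rw [hg _ hzd, mul_zero]
  · rw [hf _ hz, zero_mul]

theorem extreme_set_differences_have_two_representations
    {G : Type*} [AddCommGroup G] [Fintype G] [DecidableEq G]
    (E : Finset G) (hext : IsExtremeSet E) :
    ∀ d : G, d ≠ 0 → ∀ x ∈ E, ∀ y ∈ E, x - y = d →
      ∃ x' ∈ E, ∃ y' ∈ E, x' - y' = d ∧ (x', y') ≠ (x, y) := by
  intro d hd x hx y hy hxy
  by_contra! hcon
  obtain ⟨f, hf_norm, hf_zero, hcorr⟩ := hext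
  have huniq : ∀ z ∈ E, z - d ∈ E → z = x := fun z hz hzd =>
    congrArg Prod.fst (hcon z hz (z - d) hzd (sub_sub_cancel z d))
  have hy_eq : x - d = y := by rw [← hxy, sub_sub_cancel]
  have hcorr_d : f x * (starRingEnd ℂ) (f y) = 0 := by
    rw [← hy_eq, ← sum_mul_comp_sub_eq_of_unique_sub_mem (g := fun z => (starRingEnd ℂ) (f z))
      hf_zero (fun z hz => by simp [hf_zero z hz]) huniq]
    exact hcorr d hd
  have hnorm : ‖f x * (starRingEnd ℂ) (f y)‖ = 1 := by
    rw [norm_mul, RCLike.norm_conj, hf_norm x hx, hf_norm y hy, one_mul]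
  rw [hcorr_d, norm_zero] at hnorm
  exact zero_ne_one hnorm
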